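/- arXiv:2409.13307 — 5 statements merged into one kernel-verified Lean document; each statement's English description precedes it below -/
import Mathlib

section
/- The determinant of the matrix B_p(k) is a rational number; that is, there exists q ∈ ℚ such that det B_p(k) = q (as a complex number). -/
/-!
The entries of `B_p(k)` lie in the cyclotomic field `K = ℚ(ζ)`, `ζ` a primitive `(p-1)`-th root
of unity, and so does its determinant. An automorphism `σ` of `K` sends `ζ` to `ζ ^ t` with `t`
prime to `p - 1`, hence acts on `K`-valued characters as `ψ ↦ ψ ^ t`. As `(χ ^ k) ^ n = 1` for
`n = (p - 1) / k`, applying `σ` to `B_p(k)` multiplies both indices by `t` modulo `n`, which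
permutes the nonzero residues; so `σ` fixes `det B_p(k)`, and by Galois theory it is rational.
-/

open Matrix IntermediateField

namespace ZMod

def finPredEquivNeZero (n : ℕ) [NeZero n] : Fin (n - 1) ≃ {a : ZMod n // a ≠ 0} where
  toFun i := ⟨(i.1 + 1 : ℕ), by
    rw [Ne, natCast_eq_zero_iff]
    exact Nat.not_dvd_of_pos_of_lt i.1.succ_pos (by have := i.2; omega)⟩
  invFun a := ⟨a.1.val - 1, by
    have := a.1.val_lt
    have := (val_eq_zero a.1).not.mpr a.2
    omega⟩
  left_inv i := by
    ext
    simp only [val_cast_of_lt (show i.1 + 1 < n by have := i.2; omega), Nat.add_sub_cancel]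
  right_inv a := by
    have : a.1.val ≠ 0 := (val_eq_zero a.1).not.mpr a.2
    ext
    simp only [Nat.sub_add_cancel (Nat.one_le_iff_ne_zero.mpr this), natCast_zmod_val]

end ZMod

theorem Matrix.det_of_units_mul {R : Type*} [CommRing R] {n : ℕ} [NeZero n] (u : (ZMod n)ˣ)
    (g : ZMod n → ZMod n → R) :
    det (of fun i j : Fin (n - 1) => g (u * (i.1 + 1 : ℕ)) (u * (j.1 + 1 : ℕ))) =
      det (of fun i j : Fin (n - 1) => g (i.1 + 1 : ℕ) (j.1 + 1 : ℕ)) := by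
  let φ := ZMod.finPredEquivNeZero n
  let μ : {a : ZMod n // a ≠ 0} ≃ {a : ZMod n // a ≠ 0} :=
    (Units.mulLeft u).subtypeEquiv fun a => by simp
  let e := φ.trans (μ.trans φ.symm)
  have he (i : Fin (n - 1)) : (((e i).1 + 1 : ℕ) : ZMod n) = u * ((i.1 + 1 : ℕ) : ZMod n) :=
    congrArg Subtype.val (φ.apply_symm_apply (μ (φ i)))
  rw [← det_submatrix_equiv_self e (of fun i j : Fin (n - 1) => g (i.1 + 1 : ℕ) (j.1 + 1 : ℕ))]
  simp only [submatrix, of_apply, he]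

lemma pow_val_natCast_of_pow_eq_one {M : Type*} [Monoid M] {x : M} {n : ℕ} (h : x ^ n = 1)
    (a : ℕ) : x ^ (a : ZMod n).val = x ^ a := by
  rw [ZMod.val_natCast, ← pow_eq_pow_mod a h]

theorem IsPrimitiveRoot.isCyclotomicExtension_adjoin_simple {F L : Type*} [Field F] [Field L]
    [Algebra F L] {n : ℕ} [NeZero n] {ζ : L} (hζ : IsPrimitiveRoot ζ n) :
    IsCyclotomicExtension {n} F F⟮ζ⟯ := by
  change IsCyclotomicExtension {n} F F⟮ζ⟯.toSubalgebra
  rw [adjoin_simple_toSubalgebra_of_isAlgebraic (hζ.isIntegral (NeZero.pos n)).tower_top.isAlgebraic]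
  exact hζ.adjoin_isCyclotomicExtension F

namespace MulChar

variable {R : Type*} [CommMonoid R]

def codRestrict {F L : Type*} [Field F] [Field L] [Algebra F L] (χ : MulChar R L)
    (K : IntermediateField F L) (h : ∀ a, χ a ∈ K) : MulChar R K where
  toFun a := ⟨χ a, h a⟩
  map_one' := Subtype.ext χ.map_one
  map_mul' a b := Subtype.ext (χ.map_mul a b)
  map_nonunit' _ ha := Subtype.ext (χ.map_nonunit ha)

@[simp]
lemma ringHomComp_codRestrict {F L : Type*} [Field F] [Field L] [Algebra F L] (χ : MulChar R L)
    (K : IntermediateField F L) (h : ∀ a, χ a ∈ K) :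
    (χ.codRestrict K h).ringHomComp (algebraMap K L) = χ :=
  ext' fun _ => rfl

variable {L : Type*} [CommRing L] [IsDomain L]

lemma ringHomComp_eq_pow {χ : MulChar R L} {N : ℕ} [NeZero N] (hχ : χ ^ N = 1)
    {ζ : L} (hζ : IsPrimitiveRoot ζ N) {σ : L →+* L} {t : ℕ} (hσ : σ ζ = ζ ^ t) :
    χ.ringHomComp σ = χ ^ t := by
  refine ext fun u => ?_
  obtain ⟨i, -, hi⟩ := hζ.eq_pow_of_pow_eq_one (show χ u ^ N = 1 by
    rw [← pow_apply_coe, hχ, one_apply_coe])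
  rw [ringHomComp_apply, pow_apply_coe, ← hi, map_pow, hσ, ← pow_mul, ← pow_mul, mul_comm]

lemma apply_mem_of_isPrimitiveRoot {F : Type*} [Field F] [Finite F] {χ : MulChar F L} {N : ℕ}
    [NeZero N] (hχ : χ ^ N = 1) {ζ : L} (hζ : IsPrimitiveRoot ζ N) {S : Type*} [SetLike S L]
    [SubsemiringClass S L] {K : S} (hζK : ζ ∈ K) (a : F) : χ a ∈ K := by
  rcases eq_or_ne a 0 with rfl | ha
  · rw [χ.map_zero]
    exact zero_mem K
  · obtain ⟨i, -, hi⟩ := exists_apply_eq_pow hχ hζ ha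
    exact hi ▸ pow_mem hζK i

end MulChar

section invJacobiSumMatrix

variable {F K : Type*} [CommRing F] [Fintype F] [Field K]

/-- `B_p(k)` is `invJacobiSumMatrix (χ ^ k) ((p - 1) / k)`, with indices shifted down by one. -/
noncomputable def invJacobiSumMatrix (ψ : MulChar F K) (n : ℕ) :
    Matrix (Fin (n - 1)) (Fin (n - 1)) K :=
  of fun i j => (jacobiSum (ψ ^ (i.1 + 1)) (ψ ^ (j.1 + 1)))⁻¹

lemma map_invJacobiSumMatrix {L : Type*} [Field L] (ψ : MulChar F K) (n : ℕ) (f : K →+* L) :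
    (invJacobiSumMatrix ψ n).map f = invJacobiSumMatrix (ψ.ringHomComp f) n := by
  ext i j
  simp [invJacobiSumMatrix, map_inv₀, ← jacobiSum_ringHomComp, MulChar.ringHomComp_pow]

theorem det_invJacobiSumMatrix_pow {ψ : MulChar F K} {n : ℕ} [NeZero n] (hψ : ψ ^ n = 1) {t : ℕ}
    (ht : t.Coprime n) : det (invJacobiSumMatrix (ψ ^ t) n) = det (invJacobiSumMatrix ψ n) := by
  have := det_of_units_mul (ZMod.unitOfCoprime t ht)
    fun a b => (jacobiSum (ψ ^ a.val) (ψ ^ b.val))⁻¹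
  simp only [ZMod.coe_unitOfCoprime, ← Nat.cast_mul, pow_val_natCast_of_pow_eq_one hψ] at this
  simpa only [invJacobiSumMatrix, ← pow_mul] using this

theorem map_det_invJacobiSumMatrix_pow_eq_self {χ : MulChar F K} {N : ℕ} [NeZero N]
    (hχ : χ ^ N = 1) {ζ : K} (hζ : IsPrimitiveRoot ζ N) {σ : K →+* K} {t : ℕ}
    (hσ : σ ζ = ζ ^ t) (ht : t.Coprime N) {k n : ℕ} (hkn : k * n = N) :
    σ (invJacobiSumMatrix (χ ^ k) n).det = (invJacobiSumMatrix (χ ^ k) n).det := by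
  have : NeZero n := ⟨right_ne_zero_of_mul (hkn ▸ NeZero.ne N)⟩
  rw [RingHom.map_det, RingHom.mapMatrix_apply, map_invJacobiSumMatrix,
    ← MulChar.ringHomComp_pow, MulChar.ringHomComp_eq_pow hχ hζ hσ, ← pow_mul, mul_comm, pow_mul]
  exact det_invJacobiSumMatrix_pow (by rw [← pow_mul, hkn, hχ])
    (ht.coprime_dvd_right (Dvd.intro_left k hkn))

end invJacobiSumMatrix

theorem det_Bpk_rational_general (p : ℕ) [Fact p.Prime]
    (k : ℕ) (hkd : k ∣ p - 1)
    (χ : MulChar (ZMod p) ℂ) :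
    ∃ q : ℚ, (q : ℂ) =
      Matrix.det (Matrix.of fun i j : Fin ((p - 1) / k - 1) =>
        (∑ x : ZMod p, (χ ^ (k * (i.1 + 1))) x * (χ ^ (k * (j.1 + 1))) (1 - x))⁻¹) := by
  have : NeZero (p - 1) := ⟨(Nat.sub_pos_of_lt (Fact.out : p.Prime).one_lt).ne'⟩
  set ζ := Complex.exp (2 * Real.pi * Complex.I / (p - 1 : ℕ))
  have hζ : IsPrimitiveRoot ζ (p - 1) := Complex.isPrimitiveRoot_exp _ (NeZero.ne _)
  have : IsCyclotomicExtension {p - 1} ℚ ℚ⟮ζ⟯ := hζ.isCyclotomicExtension_adjoin_simple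
  have := IsCyclotomicExtension.finiteDimensional {p - 1} ℚ ℚ⟮ζ⟯
  have := IsCyclotomicExtension.isGalois {p - 1} ℚ ℚ⟮ζ⟯
  have hζK := IsCyclotomicExtension.zeta_spec (p - 1) ℚ ℚ⟮ζ⟯
  have hχ : χ ^ (p - 1) = 1 := ZMod.card_units p ▸ χ.pow_card_eq_one
  set χK := χ.codRestrict ℚ⟮ζ⟯ (χ.apply_mem_of_isPrimitiveRoot hχ hζ (mem_adjoin_simple_self ℚ ζ))
    with hχK
  set B := invJacobiSumMatrix (χK ^ k) ((p - 1) / k)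
  have hB : Matrix.of (fun i j : Fin ((p - 1) / k - 1) =>
        (∑ x : ZMod p, (χ ^ (k * (i.1 + 1))) x * (χ ^ (k * (j.1 + 1))) (1 - x))⁻¹) =
      B.map (algebraMap ℚ⟮ζ⟯ ℂ) := by
    rw [map_invJacobiSumMatrix, ← MulChar.ringHomComp_pow, hχK, MulChar.ringHomComp_codRestrict]
    simp only [invJacobiSumMatrix, ← pow_mul]
    rfl
  obtain ⟨q, hq⟩ := (IsGalois.mem_range_algebraMap_iff_fixed B.det).mpr fun σ =>
    map_det_invJacobiSumMatrix_pow_eq_self (ZMod.card_units p ▸ χK.pow_card_eq_one) hζK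
      (σ := σ.toRingHom) (hζK.autToPow_spec ℚ σ).symm (ZMod.val_coe_unit_coprime _) (Nat.mul_div_cancel' hkd)
  refine ⟨q, ?_⟩
  rw [hB, ← RingHom.mapMatrix_apply, ← RingHom.map_det, ← hq, ← IsScalarTower.algebraMap_apply,
    eq_ratCast]

/-- For an odd prime `p`, a divisor `k` of `p-1` with `1 ≤ k < p-1`,
`n = (p-1)/k`, and a generator `χ` of the group of multiplicative characters of `𝔽_p`,
the determinant of the `(n-1) × (n-1)` matrix `B_p(k) = [1/J_p(χ^{ki}, χ^{kj})]_{1 ≤ i,j ≤ n-1}`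
is a rational number. Here `J_p(A,B) = ∑_{x ∈ 𝔽_p} A(x) B(1-x)`. -/
theorem det_Bpk_rational (p : ℕ) [Fact p.Prime] (hp : Odd p)
    (k : ℕ) (hk1 : 1 ≤ k) (hk2 : k < p - 1) (hkd : k ∣ p - 1)
    (χ : MulChar (ZMod p) ℂ)
    (hχ : ∀ ψ : MulChar (ZMod p) ℂ, ∃ m : ℕ, ψ = χ ^ m) :
    ∃ q : ℚ, (q : ℂ) =
      Matrix.det (Matrix.of fun i j : Fin ((p - 1) / k - 1) =>
        (∑ x : ZMod p, (χ ^ (k * (i.1 + 1))) x * (χ ^ (k * (j.1 + 1))) (1 - x))⁻¹) :=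
  det_Bpk_rational_general p k hkd χ
end

section
/- Let n ≥ 2 and let v_0, v_1, …, v_{n−1} ∈ ℂ. Let ξ = e^{2πi/n} and for 0 ≤ l ≤ n−1 set λ_l = Σ_{j=0}^{n−1} v_j · ξ^{jl}. Let W_n be the (n−1)×(n−1) matrix W_n = [v_{(j−i) mod n}]_{1≤i,j≤n−1} (the almost circulant matrix of v, obtained from the n×n circulant matrix by deleting its first row and first column). Then det W_n = (1/n) · Σ_{l=0}^{n−1} ∏_{m≠l} λ_m. -/
open Matrix Finset

/-- Let `n ≥ 2`, `v : ZMod n → ℂ` (a vector indexed mod `n`),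
`ξ = e^{2πi/n}`, and `λ_l = ∑_{j=0}^{n-1} v_j ξ^{jl}` for `0 ≤ l ≤ n-1`. Let `W_n` be
the `(n-1) × (n-1)` almost circulant matrix `[v_{(j-i) mod n}]_{1 ≤ i,j ≤ n-1}`. Then
`det W_n = (1/n) ∑_{l=0}^{n-1} ∏_{m ≠ l} λ_m`. -/
theorem det_almost_circulant (n : ℕ) (hn : 2 ≤ n) (v : ZMod n → ℂ)
    (ξ : ℂ) (hξ : ξ = Complex.exp (2 * Real.pi * Complex.I / n))
    (lam : Fin n → ℂ)
    (hlam : ∀ l : Fin n, lam l = ∑ j : Fin n, v ((j.1 : ℕ) : ZMod n) * ξ ^ (j.1 * l.1)) :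
    Matrix.det (Matrix.of fun i j : Fin (n - 1) =>
        v (((j.1 + 1 : ℕ) : ZMod n) - ((i.1 + 1 : ℕ) : ZMod n))) =
      (1 / (n : ℂ)) * ∑ l : Fin n, ∏ m ∈ Finset.univ.erase l, lam m := by
  obtain ⟨m, rfl⟩ : ∃ m, n = m + 1 := ⟨n - 1, by omega⟩
  haveI : NeZero (m + 1) := ⟨by omega⟩
  have hprim : IsPrimitiveRoot ξ (m + 1) := by
    rw [hξ]; exact Complex.isPrimitiveRoot_exp (m + 1) (by omega)
  have hξ1 : ξ ^ (m + 1) = 1 := hprim.pow_eq_one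
  have hn0 : ((m + 1 : ℕ) : ℂ) ≠ 0 := Nat.cast_ne_zero.mpr (by omega)
  -- the equivalence Fin (m+1) ≃ ZMod (m+1)
  let σ : Fin (m + 1) ≃ ZMod (m + 1) :=
    { toFun := fun j => ((j.1 : ℕ) : ZMod (m + 1))
      invFun := fun x => ⟨x.val, x.val_lt⟩
      left_inv := fun j => by
        ext; simp [ZMod.val_natCast_of_lt j.2]
      right_inv := fun x => ZMod.natCast_rightInverse x }
  have hσval : ∀ j : Fin (m + 1), (σ j).val = j.1 := fun j => ZMod.val_natCast_of_lt j.2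
  -- basic power identity
  have hpow : ∀ a b c : ℕ, ξ ^ (((a + b) % (m + 1)) * c) = ξ ^ (a * c) * ξ ^ (b * c) := by
    intro a b c
    rw [pow_mul, ← pow_eq_pow_mod _ hξ1, ← pow_mul, add_mul, pow_add]
  set C : Matrix (ZMod (m + 1)) (ZMod (m + 1)) ℂ := Matrix.of fun i j => v (j - i) with hC
  set lam' : ZMod (m + 1) → ℂ := fun l => ∑ j : ZMod (m + 1), v j * ξ ^ (j.val * l.val) with hlam'
  set F : Matrix (ZMod (m + 1)) (ZMod (m + 1)) ℂ := Matrix.of fun j l => ξ ^ (j.val * l.val)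
    with hF
  -- Step 1 : C * F = F * D
  have hCF : C * F = F * Matrix.diagonal lam' := by
    ext i l
    rw [Matrix.mul_apply, Matrix.mul_diagonal]
    calc ∑ j : ZMod (m + 1), C i j * F j l
        = ∑ k : ZMod (m + 1), C i (k + i) * F (k + i) l :=
          (Fintype.sum_equiv (Equiv.addRight i) _ _ (fun k => rfl)).symm
      _ = ∑ k : ZMod (m + 1), v k * (ξ ^ (k.val * l.val) * ξ ^ (i.val * l.val)) := by
          refine Finset.sum_congr rfl fun k _ => ?_
          rw [hC, hF]
          simp only [Matrix.of_apply, add_sub_cancel_right]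
          rw [ZMod.val_add, hpow]
      _ = F i l * lam' l := by
          rw [hF, hlam', Finset.mul_sum]
          simp only [Matrix.of_apply]
          exact Finset.sum_congr rfl fun k _ => by ring
  -- Step 2 : F invertible
  have hFdet : IsUnit F.det := by
    rw [← Matrix.det_submatrix_equiv_self σ F]
    have : F.submatrix σ σ = (Matrix.vandermonde fun l : Fin (m + 1) => ξ ^ l.1)ᵀ := by
      ext j l
      simp only [Matrix.submatrix_apply, Matrix.transpose_apply, Matrix.vandermonde, hF,
        Matrix.of_apply, hσval, ← pow_mul, mul_comm]
    rw [this, Matrix.det_transpose, Matrix.det_vandermonde]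
    refine isUnit_iff_ne_zero.mpr (Finset.prod_ne_zero_iff.mpr fun i _ =>
      Finset.prod_ne_zero_iff.mpr fun j hj => sub_ne_zero.mpr fun h => ?_)
    exact (Finset.mem_Ioi.mp hj).ne' (Fin.eq_of_val_eq (hprim.pow_inj j.2 i.2 h))
  -- Step 3 : trace of adjugate
  have htr : (Matrix.adjugate C).trace = ∑ l : ZMod (m + 1), ∏ k ∈ Finset.univ.erase l, lam' k := by
    have hCeq : C = F * Matrix.diagonal lam' * F⁻¹ := by
      rw [← hCF, Matrix.mul_assoc, Matrix.mul_nonsing_inv F hFdet, Matrix.mul_one]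
    have hadj : Matrix.adjugate C =
        Matrix.adjugate F⁻¹ * (Matrix.adjugate (Matrix.diagonal lam') * Matrix.adjugate F) := by
      rw [hCeq, Matrix.adjugate_mul_distrib, Matrix.adjugate_mul_distrib]
    rw [hadj, Matrix.trace_mul_comm, Matrix.mul_assoc,
      ← Matrix.adjugate_mul_distrib, Matrix.nonsing_inv_mul F hFdet, Matrix.adjugate_one,
      Matrix.mul_one, Matrix.adjugate_diagonal, Matrix.trace_diagonal]
  -- Step 4 : diagonal entries of adjugate are all equal
  have hdiag : ∀ i : ZMod (m + 1), Matrix.adjugate C i i = Matrix.adjugate C 0 0 := by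
    intro i
    have hsub : C.submatrix (Equiv.addRight i) (Equiv.addRight i) = C := by
      ext x y
      simp only [Matrix.submatrix_apply, Equiv.coe_addRight, hC, Matrix.of_apply,
        add_sub_add_right_eq_sub]
    have h := Matrix.adjugate_submatrix_equiv_self (Equiv.addRight i) C
    rw [hsub] at h
    have := congrFun (congrFun h 0) 0
    simpa using this.symm
  -- Step 5 : trace = (m+1) * (adjugate C 0 0)
  have htr2 : (Matrix.adjugate C).trace = ((m + 1 : ℕ) : ℂ) * Matrix.adjugate C 0 0 := by
    rw [Matrix.trace]
    calc ∑ i : ZMod (m + 1), (Matrix.adjugate C).diag i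
        = ∑ _i : ZMod (m + 1), Matrix.adjugate C 0 0 := Finset.sum_congr rfl fun i _ => hdiag i
      _ = ((m + 1 : ℕ) : ℂ) * Matrix.adjugate C 0 0 := by
          rw [Finset.sum_const, Finset.card_univ, ZMod.card, nsmul_eq_mul]
  -- Step 6 : adjugate C 0 0 = det W
  have hW : Matrix.adjugate C 0 0 = Matrix.det (Matrix.of fun i j : Fin (m + 1 - 1) =>
      v (((j.1 + 1 : ℕ) : ZMod (m + 1)) - ((i.1 + 1 : ℕ) : ZMod (m + 1)))) := by
    have h := Matrix.adjugate_submatrix_equiv_self σ C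
    have h00 := congrFun (congrFun h 0) 0
    have hσ0 : σ (0 : Fin (m + 1)) = 0 := by simp [σ]
    rw [Matrix.submatrix_apply, hσ0] at h00
    rw [← h00, Matrix.adjugate_fin_succ_eq_det_submatrix]
    simp only [Fin.val_zero, add_zero, pow_zero, one_mul, Fin.succAbove_zero]
    congr 1
  -- Step 7 : identify the sums
  have hlameq : ∀ l : Fin (m + 1), lam l = lam' (σ l) := by
    intro l
    rw [hlam, hlam']
    refine Fintype.sum_equiv σ _ _ fun j => ?_
    rw [hσval, hσval]
    simp only [σ, Equiv.coe_fn_mk]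
  have hsum : ∑ l : Fin (m + 1), ∏ k ∈ Finset.univ.erase l, lam k
      = ∑ l : ZMod (m + 1), ∏ k ∈ Finset.univ.erase l, lam' k := by
    refine Fintype.sum_equiv σ _ _ fun l => ?_
    refine Finset.prod_bij (fun k _ => σ k) ?_ ?_ ?_ ?_
    · intro k hk
      simp only [Finset.mem_erase, Finset.mem_univ, and_true] at hk ⊢
      exact fun h => hk (σ.injective h)
    · intro a _ b _ h
      exact σ.injective h
    · intro b hb
      refine ⟨σ.symm b, ?_, σ.apply_symm_apply b⟩
      simp only [Finset.mem_erase, Finset.mem_univ, and_true] at hb ⊢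
      exact fun h => hb (by rw [← h, σ.apply_symm_apply])
    · intro k _
      exact hlameq k
  rw [← hW]
  rw [hsum]
  rw [← htr]
  rw [htr2]
  rw [one_div, inv_mul_cancel_left₀ hn0]
end

section
/- det B_p(k) = (−1)^{(n−1)(p+n−3)/2} · p^{−(n−1)} · det D_p(k), where D_p(k) = [a_{ij}]_{1≤i,j≤n−1} is the (n−1)×(n−1) matrix with a_{ii} = −p for 1 ≤ i ≤ n−1 and a_{ij} = G_p(χ^{ki−kj}) for 1 ≤ i ≠ j ≤ n−1. -/
open Equiv Finset

lemma revPerm_succ (n : ℕ) :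
    (Fin.revPerm : Perm (Fin (n+1))) =
      Equiv.Perm.decomposeFin.symm (Fin.last n, Fin.revPerm * finRotate n) := by
  rcases Nat.eq_zero_or_pos n with rfl | hn
  · ext x
    have hx : x = 0 := Fin.ext (by omega)
    subst hx
    simp [Fin.rev_zero]
  obtain ⟨n', rfl⟩ := Nat.exists_eq_succ_of_ne_zero hn.ne'
  ext x
  refine Fin.cases ?_ (fun i => ?_) x
  · simp [Fin.rev_zero]
  · rw [Equiv.Perm.decomposeFin_symm_apply_succ]
    simp only [Fin.revPerm_apply, Perm.coe_mul, Function.comp_apply]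
    by_cases hi : i = Fin.last n'
    · subst hi
      rw [finRotate_last, swap_apply_def]
      rw [if_neg (by simp [Fin.ext_iff]), if_pos (by simp [Fin.ext_iff, Fin.val_rev])]
      simp [Fin.ext_iff, Fin.val_rev]
    · have hlt : i.1 < n' := lt_of_le_of_ne (Nat.lt_succ_iff.mp i.isLt) (fun h => hi (Fin.ext h))
      have hrot : ((finRotate (n'+1)) i).1 = i.1 + 1 := by
        rw [coe_finRotate, if_neg hi]
      have h1 : ((Fin.rev ((finRotate (n'+1)) i)).succ : Fin (n'+2)) ≠ 0 := Fin.succ_ne_zero _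
      have h2 : (Fin.rev ((finRotate (n'+1)) i)).succ ≠ Fin.last (n'+1) := by
        simp only [ne_eq, Fin.ext_iff, Fin.val_succ, Fin.val_rev, Fin.val_last, hrot]
        omega
      rw [swap_apply_of_ne_of_ne h1 h2]
      simp only [Fin.ext_iff, Fin.val_rev, Fin.val_succ, hrot]
      omega

lemma sign_revPerm (n : ℕ) :
    Equiv.Perm.sign (Fin.revPerm : Perm (Fin n)) = (-1 : ℤˣ)^(n*(n-1)/2) := by
  induction n with
  | zero =>
    have : (Fin.revPerm : Perm (Fin 0)) = 1 := Subsingleton.elim _ _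
    simp [this]
  | succ m ih =>
    rcases Nat.eq_zero_or_pos m with rfl | hm
    · have : (Fin.revPerm : Perm (Fin 1)) = 1 := Subsingleton.elim _ _
      simp [this]
    obtain ⟨m', rfl⟩ := Nat.exists_eq_succ_of_ne_zero hm.ne'
    obtain ⟨t, ht⟩ : ∃ t, m'*(m'+1) = t + t := Nat.even_mul_succ_self m'
    have hB : (m'+1)*m' = m'*(m'+1) := Nat.mul_comm _ _
    have hA : (m'+1+1)*(m'+1+1-1) = m'*(m'+1) + 2*(m'+1) := by
      simp only [Nat.add_sub_cancel]; ring
    have hC : (m'+1)*(m'+1-1) = (m'+1)*m' := by simp only [Nat.add_sub_cancel]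
    have key : (m'+1+1)*(m'+1+1-1)/2 = (m'+1)*(m'+1-1)/2 + m' + 1 := by omega
    rw [revPerm_succ, Equiv.Perm.decomposeFin.symm_sign, if_neg (by simp [Fin.ext_iff]),
      map_mul, ih, sign_finRotate]
    simp only [Nat.succ_eq_add_one]
    rw [key, pow_succ, pow_add]
    exact mul_comm _ _




/-- `det B_p(k) = (-1)^{(n-1)(p+n-3)/2} · p^{-(n-1)} · det D_p(k)`, where
`D_p(k)` is the `(n-1) × (n-1)` matrix with diagonal entries `-p` and off-diagonal
entries `G_p(χ^{ki-kj})`, `G_p(ψ) = ∑_{x ∈ 𝔽_p} ψ(x) ζ_p^x` being the Gauss sum,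
`ζ_p = e^{2πi/p}`, and `n = (p-1)/k`. -/
theorem det_Bpk_eq_det_Dpk (p : ℕ) [Fact p.Prime] (hp : Odd p)
    (k : ℕ) (hk1 : 1 ≤ k) (hk2 : k < p - 1) (hkd : k ∣ p - 1)
    (χ : MulChar (ZMod p) ℂ)
    (hχ : ∀ ψ : MulChar (ZMod p) ℂ, ∃ m : ℕ, ψ = χ ^ m)
    (n : ℕ) (hn : n = (p - 1) / k)
    (ζ : ℂ) (hζ : ζ = Complex.exp (2 * Real.pi * Complex.I / p))
    (G : MulChar (ZMod p) ℂ → ℂ) (hG : ∀ ψ, G ψ = ∑ x : ZMod p, ψ x * ζ ^ x.val) :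
    Matrix.det (Matrix.of fun i j : Fin (n - 1) =>
        (∑ x : ZMod p, (χ ^ (k * (i.1 + 1))) x * (χ ^ (k * (j.1 + 1))) (1 - x))⁻¹) =
      (-1 : ℂ) ^ ((n - 1) * (p + n - 3) / 2) * (p : ℂ) ^ (-(((n - 1 : ℕ) : ℤ))) *
        Matrix.det (Matrix.of fun i j : Fin (n - 1) =>
          if i = j then (-(p : ℂ))
          else G (χ ^ (k * (i.1 + 1)) * (χ ^ (k * (j.1 + 1)))⁻¹)) := by
  classical
  have hprime : p.Prime := Fact.out
  have hp3 : 3 ≤ p := by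
    rcases hp with ⟨s, hs⟩; have := hprime.two_le; omega
  have hp0 : p ≠ 0 := hprime.ne_zero
  have hkn : k * n = p - 1 := by rw [hn]; exact Nat.mul_div_cancel' hkd
  have hn2 : 2 ≤ n := by nlinarith [hkn, hk2, hk1]
  set m := n - 1 with hmdef
  have hm1 : 1 ≤ m := by omega
  have hmn : m + 1 = n := by omega
  -- additive character
  have hζp : ζ ^ p = 1 := by
    rw [hζ]; exact (Complex.isPrimitiveRoot_exp p hp0).pow_eq_one
  set ψp : AddChar (ZMod p) ℂ := AddChar.zmodChar p hζp with hψdef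
  have hψ : ψp.IsPrimitive := by
    have h1 : IsPrimitiveRoot ζ p := hζ ▸ Complex.isPrimitiveRoot_exp p hp0
    exact AddChar.zmodChar_primitive_of_primitive_root p h1
  have hGs : ∀ χ' : MulChar (ZMod p) ℂ, G χ' = gaussSum χ' ψp := by
    intro χ'
    rw [hG, gaussSum]
    exact Finset.sum_congr rfl fun x _ => by rw [hψdef, AddChar.zmodChar_apply]
  have hcard : (Fintype.card (ZMod p) : ℂ) = (p : ℂ) := by rw [ZMod.card]
  have hpC : (p : ℂ) ≠ 0 := Nat.cast_ne_zero.mpr hp0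
  have hcard0 : (Fintype.card (ZMod p) : ℂ) ≠ 0 := by rw [hcard]; exact hpC
  -- order of χ
  have horder : orderOf χ = p - 1 := by
    have hfin : Finite (MulChar (ZMod p) ℂ) := inferInstance
    have hFt : Fintype (MulChar (ZMod p) ℂ) := Fintype.ofFinite _
    have h1 : ∀ ψ' : MulChar (ZMod p) ℂ, ψ' ∈ Subgroup.zpowers χ := by
      intro ψ'
      obtain ⟨a, ha⟩ := hχ ψ'
      exact ⟨(a : ℤ), by simp [ha, zpow_natCast]⟩
    rw [orderOf_eq_card_of_forall_mem_zpowers h1]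
    have hEnough : HasEnoughRootsOfUnity ℂ (Monoid.exponent (ZMod p)ˣ) := by
      have : NeZero ((Monoid.exponent (ZMod p)ˣ : ℕ) : ℂ) := by
        refine ⟨Nat.cast_ne_zero.mpr ?_⟩
        exact Monoid.exponent_ne_zero_of_finite
      infer_instance
    have := MulChar.card_eq_card_units_of_hasEnoughRootsOfUnity (ZMod p) ℂ
    rw [this, Nat.card_eq_fintype_card, ZMod.card_units_eq_totient, Nat.totient_prime hprime]
  have hpowiff : ∀ a : ℕ, χ ^ a = 1 ↔ (p - 1) ∣ a := by
    intro a
    rw [← horder, orderOf_dvd_iff_pow_eq_one]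
  have hpow1 : χ ^ (p - 1) = 1 := (hpowiff _).mpr dvd_rfl
  have hne1a : (-1 : ZMod p) ≠ 1 := by
    intro h
    have h2 : ((2 : ℕ) : ZMod p) = 0 := by push_cast; linear_combination -h
    rw [ZMod.natCast_eq_zero_iff] at h2
    have := Nat.le_of_dvd (by norm_num) h2
    omega
  have hχ1 : χ (-1) = -1 := by
    have hsq : χ (-1) * χ (-1) = 1 := by
      rw [← map_mul, neg_mul_neg, one_mul, map_one]
    rcases mul_self_eq_one_iff.mp hsq with h | h
    · exfalso
      have hEnough : HasEnoughRootsOfUnity ℂ (Monoid.exponent (ZMod p)ˣ) := by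
        have : NeZero ((Monoid.exponent (ZMod p)ˣ : ℕ) : ℂ) :=
          ⟨Nat.cast_ne_zero.mpr Monoid.exponent_ne_zero_of_finite⟩
        infer_instance
      obtain ⟨ψ0, hψ0⟩ := MulChar.exists_apply_ne_one_of_hasEnoughRootsOfUnity (ZMod p) ℂ hne1a
      obtain ⟨a, rfl⟩ := hχ ψ0
      rcases Nat.eq_zero_or_pos a with rfl | ha
      · rw [pow_zero] at hψ0
        apply hψ0
        have h1 := MulChar.one_apply_coe (R := ZMod p) (R' := ℂ) (-1)
        simpa using h1
      · rw [MulChar.pow_apply' χ ha.ne'] at hψ0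
        exact hψ0 (by rw [h, one_pow])
    · exact h
  set A : Fin m → MulChar (ZMod p) ℂ := fun i => χ ^ (k * (i.1 + 1)) with hAdef
  have hkmul : ∀ a : ℕ, 0 < a → a < 2 * n → (χ ^ (k * a) = 1 ↔ a = n) := by
    intro a ha1 ha2
    rw [hpowiff, ← hkn]
    constructor
    · rintro ⟨c, hc⟩
      have hc' : a = n * c := Nat.eq_of_mul_eq_mul_left hk1 (by rw [hc]; ring)
      rcases c with _ | _ | c
      · rw [Nat.mul_zero] at hc'; omega
      · rw [Nat.mul_one] at hc'; omega
      · have hnc : n * (c + 1 + 1) = n * c + 2 * n := by ring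
        omega
    · rintro rfl; exact ⟨1, by ring⟩
  have hAn : ∀ a : ℕ, 0 < a → a ≤ n → χ ^ (k * a) * χ ^ (k * (n - a)) = 1 := by
    intro a ha1 ha2
    rw [← pow_add, ← Nat.mul_add, Nat.add_sub_cancel' ha2, hkn]
    exact hpow1
  have hAne : ∀ i : Fin m, A i ≠ 1 := by
    intro i hi
    have := (hkmul (i.1 + 1) (by omega) (by have := i.isLt; omega)).mp hi
    have := i.isLt; omega
  have hAmulne : ∀ i j : Fin m, i.1 + j.1 + 2 ≠ n → A i * A j ≠ 1 := by
    intro i j hij hcon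
    rw [hAdef] at hcon
    simp only [← pow_add, ← Nat.mul_add] at hcon
    have harr : i.1 + 1 + (j.1 + 1) = i.1 + j.1 + 2 := by ring
    rw [harr] at hcon
    have := (hkmul (i.1 + j.1 + 2) (by omega) (by have := i.isLt; have := j.isLt; omega)).mp hcon
    exact hij this
  have hAinv : ∀ i j : Fin m, i.1 + j.1 + 2 = n → A j = (A i)⁻¹ := by
    intro i j hij
    refine eq_inv_of_mul_eq_one_right ?_
    rw [hAdef]
    simp only [← pow_add, ← Nat.mul_add]
    rw [show i.1 + 1 + (j.1 + 1) = i.1 + j.1 + 2 by ring, hij, hkn]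
    exact hpow1
  -- gauss sum products
  have hg0 : ∀ i : Fin m, gaussSum (A i) ψp ≠ 0 := fun i =>
    gaussSum_ne_zero_of_nontrivial hcard0 (hAne i) hψ
  have KEY1 : ∀ χ' : MulChar (ZMod p) ℂ, χ' ≠ 1 →
      gaussSum χ' ψp * gaussSum χ'⁻¹ ψp = χ' (-1) * p := by
    intro χ' hc
    have h1 := gaussSum_mul_gaussSum_eq_card hc hψ
    have h2 := mul_gaussSum_inv_eq_gaussSum χ'⁻¹ ψp
    calc gaussSum χ' ψp * gaussSum χ'⁻¹ ψp
        = gaussSum χ' ψp * (χ'⁻¹ (-1) * gaussSum χ'⁻¹ ψp⁻¹) := by rw [h2]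
      _ = χ'⁻¹ (-1) * (gaussSum χ' ψp * gaussSum χ'⁻¹ ψp⁻¹) := by ring
      _ = χ' (-1) * p := by
          rw [h1, MulChar.inv_apply', inv_neg_one, hcard]
  set g : Fin m → ℂ := fun i => gaussSum (A i) ψp with hgdef
  set c : Fin m → ℂ := fun i => (g i)⁻¹ with hcdef
  set M' : Matrix (Fin m) (Fin m) ℂ :=
    Matrix.of fun i j => if i.1 + j.1 + 2 = n then (-(p:ℂ)) else gaussSum (A i * A j) ψp
    with hM'def
  have hBentry : ∀ i j : Fin m,
      (∑ x : ZMod p, (χ ^ (k * (i.1 + 1))) x * (χ ^ (k * (j.1 + 1))) (1 - x))⁻¹ =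
        c i * (c j * M' i j) := by
    intro i j
    have hJ : (∑ x : ZMod p, (χ ^ (k * (i.1 + 1))) x * (χ ^ (k * (j.1 + 1))) (1 - x)) =
        jacobiSum (A i) (A j) := rfl
    rw [hJ]
    by_cases hij : i.1 + j.1 + 2 = n
    · have hJval : jacobiSum (A i) (A j) = - (A i) (-1) := by
        rw [hAinv i j hij]; exact jacobiSum_nontrivial_inv (hAne i)
      have hgg : g i * g j = (A i) (-1) * p := by
        rw [hgdef]; simp only; rw [hAinv i j hij]; exact KEY1 _ (hAne i)
      set u := (A i) (-1) with hu
      have hu2 : u * u = 1 := by rw [hu, ← map_mul, neg_mul_neg, one_mul, map_one]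
      have hu0 : u ≠ 0 := by
        intro h; rw [h, mul_zero] at hu2; exact zero_ne_one hu2
      rw [hJval, hM'def]
      simp only [Matrix.of_apply, if_pos hij]
      rw [hcdef]
      simp only
      rw [inv_neg, inv_eq_of_mul_eq_one_right hu2]
      have huinv : u⁻¹ = u := inv_eq_of_mul_eq_one_right hu2
      calc -u = -(u⁻¹) := by rw [huinv]
        _ = -(↑p / (u * ↑p)) := by rw [mul_comm u, div_mul_eq_div_div, div_self hpC, one_div]
        _ = -(↑p / (g i * g j)) := by rw [hgg]
        _ = (g i)⁻¹ * ((g j)⁻¹ * -↑p) := by rw [div_eq_mul_inv, mul_inv]; ring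
    · have hmul := hAmulne i j hij
      have hJval := jacobiSum_eq_gaussSum_mul_gaussSum_div_gaussSum hcard0 hmul hψ
      have hgAB : gaussSum (A i * A j) ψp ≠ 0 :=
        gaussSum_ne_zero_of_nontrivial hcard0 hmul hψ
      rw [hJval, hM'def]
      simp only [Matrix.of_apply, if_neg hij]
      rw [hcdef]
      simp only
      rw [div_eq_mul_inv, mul_inv, mul_inv, inv_inv]
      ring
  set D : Matrix (Fin m) (Fin m) ℂ :=
    Matrix.of fun i j : Fin m =>
      if i = j then (-(p : ℂ)) else G (χ ^ (k * (i.1 + 1)) * (χ ^ (k * (j.1 + 1)))⁻¹)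
    with hDdef
  -- step B : det B = prod c * prod c * det M'
  have hdetB : Matrix.det (Matrix.of fun i j : Fin m =>
      (∑ x : ZMod p, (χ ^ (k * (i.1 + 1))) x * (χ ^ (k * (j.1 + 1))) (1 - x))⁻¹) =
      (∏ i, c i) * ((∏ i, c i) * Matrix.det M') := by
    have h1 : (Matrix.of fun i j : Fin m =>
        (∑ x : ZMod p, (χ ^ (k * (i.1 + 1))) x * (χ ^ (k * (j.1 + 1))) (1 - x))⁻¹) =
        Matrix.of fun i j : Fin m =>
          c i * ((Matrix.of fun i' j' : Fin m => c j' * M' i' j') i j) := by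
      ext i j
      simp only [Matrix.of_apply]
      exact hBentry i j
    rw [h1, Matrix.det_mul_column, Matrix.det_mul_row]
  -- step C : M' = D.submatrix id rev, det M' = sign * det D
  have hMD : M' = D.submatrix id Fin.revPerm := by
    ext i j
    have hjlt := j.isLt
    have hilt := i.isLt
    have hrevj : (Fin.rev j).1 = m - 1 - j.1 := by rw [Fin.val_rev]; omega
    simp only [Matrix.submatrix_apply, id_eq, Fin.revPerm_apply, hM'def, hDdef, Matrix.of_apply]
    by_cases hij : i.1 + j.1 + 2 = n
    · rw [if_pos hij, if_pos (Fin.ext (by rw [hrevj]; omega))]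
    · rw [if_neg hij, if_neg (by
        intro hcon
        apply hij
        have := congrArg Fin.val hcon
        rw [hrevj] at this
        omega)]
      rw [hGs]
      congr 2
      have hrj1 : (Fin.rev j).1 + 1 = m - j.1 := by rw [hrevj]; omega
      rw [hrj1]
      have hinv : (χ ^ (k * (m - j.1)))⁻¹ = χ ^ (k * (j.1 + 1)) := by
        refine inv_eq_of_mul_eq_one_right ?_
        rw [← pow_add, ← Nat.mul_add, show m - j.1 + (j.1 + 1) = m + 1 by omega, hmn, hkn]
        exact hpow1
      rw [hinv]
  have hdetM' : Matrix.det M' = ((-1 : ℂ) ^ (m * (m - 1) / 2)) * Matrix.det D := by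
    rw [hMD, Matrix.det_permute', sign_revPerm]
    norm_cast
  -- step D : products of gauss sums
  have hArev : ∀ i : Fin m, A (Fin.rev i) = (A i)⁻¹ := by
    intro i
    refine hAinv i (Fin.rev i) ?_
    have := i.isLt
    rw [Fin.val_rev]
    omega
  set S : ℕ := ∑ i : Fin m, k * (i.1 + 1) with hSdef
  have hprodg : (∏ i, g i) * (∏ i, g i) = (-1 : ℂ) ^ S * (p : ℂ) ^ m := by
    have h1 : ∏ i, g i = ∏ i, g (Fin.rev i) :=
      (Equiv.prod_comp Fin.revPerm g).symm
    rw (occs := .pos [2]) [h1]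
    rw [← Finset.prod_mul_distrib]
    have h2 : ∀ i : Fin m, g i * g (Fin.rev i) = (-1 : ℂ) ^ (k * (i.1 + 1)) * p := by
      intro i
      have := KEY1 (A i) (hAne i)
      rw [← hArev i] at this
      rw [hgdef]
      simp only
      rw [this, hAdef]
      simp only
      rw [MulChar.pow_apply' χ (by positivity) (-1), hχ1]
    rw [Finset.prod_congr rfl fun i _ => h2 i, Finset.prod_mul_distrib,
      Finset.prod_pow_eq_pow_sum, ← hSdef, Finset.prod_const]
    congr 1
    simp [Finset.card_univ]
  -- arithmetic for S
  have h2S : 2 * S = (p - 1) * m := by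
    have hS1 : S = k * ∑ i : Fin m, (i.1 + 1) := by rw [hSdef, Finset.mul_sum]
    have hS2 : (∑ i : Fin m, (i.1 + 1)) = ∑ i ∈ Finset.range (m + 1), i := by
      rw [Finset.sum_range_succ' (fun i => i) m]
      simp [Fin.sum_univ_eq_sum_range (fun i => i + 1) m]
    have hS3 := Finset.sum_range_id_mul_two (m + 1)
    have : 2 * S = k * ((∑ i ∈ Finset.range (m + 1), i) * 2) := by rw [hS1, hS2]; ring
    rw [hS3] at this
    rw [this, Nat.add_sub_cancel, show k * ((m + 1) * m) = (k * (m + 1)) * m by ring, hmn, hkn]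
  -- final assembly
  have hexp : S + m * (m - 1) / 2 = m * (p + n - 3) / 2 := by
    obtain ⟨t2, ht2⟩ : ∃ t, m * (m - 1) = t + t := by
      have he := Nat.even_mul_succ_self (m - 1)
      rw [Nat.sub_add_cancel hm1] at he
      obtain ⟨t, ht⟩ := he
      exact ⟨t, by rw [Nat.mul_comm]; exact ht⟩
    have hmp : m * (p + n - 3) = (p - 1) * m + m * (m - 1) := by
      have e2 : p + n - 3 = (p - 1) + (m - 1) := by omega
      rw [e2, Nat.mul_add, Nat.mul_comm m (p - 1)]
    omega
  have hprodc : (∏ i, c i) = (∏ i, g i)⁻¹ := by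
    rw [hcdef, ← Finset.prod_inv_distrib]
  rw [hdetB, hdetM', hprodc]
  have hstep : (∏ i, g i)⁻¹ * ((∏ i, g i)⁻¹ * ((-1 : ℂ) ^ (m * (m - 1) / 2) * D.det)) =
      ((∏ i, g i) * (∏ i, g i))⁻¹ * ((-1 : ℂ) ^ (m * (m - 1) / 2) * D.det) := by
    rw [mul_inv]; ring
  rw [hstep, hprodg]
  have hinvneg : ((-1 : ℂ) ^ S)⁻¹ = (-1 : ℂ) ^ S := by
    rw [← inv_pow, inv_neg, inv_one]
  have hz : (p : ℂ) ^ (-(m : ℤ)) = ((p : ℂ) ^ m)⁻¹ := by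
    rw [zpow_neg, zpow_natCast]
  rw [mul_inv, hinvneg, hz]
  rw [show (-1 : ℂ) ^ S * ((p : ℂ) ^ m)⁻¹ * ((-1 : ℂ) ^ (m * (m - 1) / 2) * D.det) =
      ((-1 : ℂ) ^ S * (-1 : ℂ) ^ (m * (m - 1) / 2)) * ((p : ℂ) ^ m)⁻¹ * D.det by ring]
  rw [← pow_add, hexp]
end

section
/- Let M = [G_p(χ^{k(i−j)})]_{0≤i,j≤n−1}. For each coset b ∈ 𝔽_p^×/U_k set λ_b = n·Σ_{y∈U_k} ζ_p^{by} (this is well-defined on cosets). Then the λ_b, as b ranges over 𝔽_p^×/U_k, are exactly all the eigenvalues of M; equivalently, the characteristic polynomial of M equals ∏_{b ∈ 𝔽_p^×/U_k} (X − λ_b). -/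
open Polynomial Matrix Subgroup

lemma charpoly_diagonal' {m : Type*} [Fintype m] [DecidableEq m] (d : m → ℂ) :
    (Matrix.diagonal d).charpoly = ∏ i, (X - C (d i)) := by
  have h : charmatrix (Matrix.diagonal d) = Matrix.diagonal fun i => (X : ℂ[X]) - C (d i) := by
    ext i j
    by_cases hij : i = j
    · subst hij; simp
    · simp [charmatrix_apply_ne _ _ _ hij, Matrix.diagonal_apply_ne _ hij,
        Matrix.diagonal_apply_ne]
  rw [Matrix.charpoly, h, Matrix.det_diagonal]

lemma charpoly_conj' {m : Type*} [Fintype m] [DecidableEq m] (P A Q : Matrix m m ℂ)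
    (hPQ : P * Q = 1) (hQP : Q * P = 1) :
    (P * A * Q).charpoly = A.charpoly := by
  have hmap : P.map (C : ℂ →+* ℂ[X]) * Q.map (C : ℂ →+* ℂ[X]) = 1 := by
    rw [← Matrix.map_mul, hPQ, Matrix.map_one _ (map_zero _) (map_one _)]
  have hmap' : Q.map (C : ℂ →+* ℂ[X]) * P.map (C : ℂ →+* ℂ[X]) = 1 := by
    rw [← Matrix.map_mul, hQP, Matrix.map_one _ (map_zero _) (map_one _)]
  have key : charmatrix (P * A * Q) =
      P.map (C : ℂ →+* ℂ[X]) * charmatrix A * Q.map (C : ℂ →+* ℂ[X]) := by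
    unfold charmatrix
    have hc : ∀ B : Matrix m m ℂ[X], Matrix.scalar m (X : ℂ[X]) * B
        = B * Matrix.scalar m (X : ℂ[X]) := fun B =>
      (Matrix.scalar_commute (X : ℂ[X]) (fun r' => Commute.all _ _) B).eq
    rw [Matrix.mul_sub, Matrix.sub_mul]
    congr 1
    · rw [← hc, Matrix.mul_assoc, hmap, Matrix.mul_one]
    · simp only [RingHom.mapMatrix_apply, ← Matrix.map_mul]
  rw [Matrix.charpoly, key, Matrix.det_mul, Matrix.det_mul, Matrix.charpoly,
    mul_comm, ← mul_assoc, ← Matrix.det_mul, hmap', Matrix.det_one, one_mul]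

lemma geom_sum_fin (α : ℂ) (N : ℕ) (h : α ^ N = 1) :
    ∑ j : Fin N, α ^ (j : ℕ) = if α = 1 then (N : ℂ) else 0 := by
  rw [Fin.sum_univ_eq_sum_range]
  split_ifs with h1
  · subst h1; simp
  · rw [geom_sum_eq h1, h, sub_self, zero_div]

open Polynomial in
open scoped Classical in
/-- Let `M = [G_p(χ^{k(i-j)})]_{0 ≤ i,j ≤ n-1}` and for each coset
`b ∈ 𝔽_p^×/U_k` let `λ_b = n · ∑_{y ∈ U_k} ζ_p^{by}`. Then the `λ_b` are exactly all
the eigenvalues of `M`, i.e. the characteristic polynomial of `M` equals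
`∏_{b ∈ 𝔽_p^×/U_k} (X - λ_b)`. Here `U_k = {y ∈ 𝔽_p^× : y^k = 1}`, `n = (p-1)/k`,
`ζ_p = e^{2πi/p}` and `G_p(ψ) = ∑_{x ∈ 𝔽_p} ψ(x) ζ_p^x`. -/
theorem charpoly_gaussSum_matrix (p : ℕ) [Fact p.Prime] (hp : Odd p)
    (k : ℕ) (hk1 : 1 ≤ k) (hk2 : k < p - 1) (hkd : k ∣ p - 1)
    (χ : MulChar (ZMod p) ℂ)
    (hχ : ∀ ψ : MulChar (ZMod p) ℂ, ∃ m : ℕ, ψ = χ ^ m)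
    (n : ℕ) (hn : n = (p - 1) / k)
    (ζ : ℂ) (hζ : ζ = Complex.exp (2 * Real.pi * Complex.I / p))
    (G : MulChar (ZMod p) ℂ → ℂ) (hG : ∀ ψ, G ψ = ∑ x : ZMod p, ψ x * ζ ^ x.val)
    (Uk : Subgroup (ZMod p)ˣ) (hUk : ∀ y : (ZMod p)ˣ, y ∈ Uk ↔ y ^ k = 1)
    (lam : (ZMod p)ˣ → ℂ)
    (hlam : ∀ b : (ZMod p)ˣ,
      lam b = (n : ℂ) * ∑ y : Uk, ζ ^ (((b * (y : (ZMod p)ˣ) : (ZMod p)ˣ) : ZMod p)).val) :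
    Matrix.charpoly (Matrix.of fun i j : Fin n =>
        G (χ ^ (k * i.1) * (χ ^ (k * j.1))⁻¹)) =
      ∏ b : (ZMod p)ˣ ⧸ Uk, (X - C (lam b.out)) := by
  classical
  have hcardu : Fintype.card (ZMod p)ˣ = p - 1 := ZMod.card_units p
  have hnk : n * k = p - 1 := by rw [hn]; exact Nat.div_mul_cancel hkd
  have hp1 : 1 < p := (Fact.out : p.Prime).one_lt
  have hnpos : 0 < n := by
    rcases Nat.eq_zero_or_pos n with h | h
    · rw [h] at hnk; omega
    · exact h
  have hncast : (n : ℂ) ≠ 0 := Nat.cast_ne_zero.mpr (by omega)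
  -- χ is injective on units
  haveI : NeZero ((Monoid.exponent (ZMod p)ˣ : ℕ) : ℂ) :=
    ⟨Nat.cast_ne_zero.mpr Monoid.exponent_ne_zero_of_finite⟩
  have hχinj : ∀ u : (ZMod p)ˣ, χ (u : ZMod p) = 1 → u = 1 := by
    intro u hu
    by_contra h
    have h0 : ((u : ZMod p)) ≠ 1 := fun he => h (Units.ext he)
    obtain ⟨ψ, hψ⟩ := MulChar.exists_apply_ne_one_of_hasEnoughRootsOfUnity (ZMod p) ℂ h0
    obtain ⟨m, rfl⟩ := hχ ψ
    exact hψ (by rw [MulChar.pow_apply_coe, hu, one_pow])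
  -- χ never vanishes on units
  have hne0 : ∀ u : (ZMod p)ˣ, χ (u : ZMod p) ≠ 0 := by
    intro u
    have h1 : χ (u : ZMod p) * χ ((u⁻¹ : (ZMod p)ˣ) : ZMod p) = 1 := by
      rw [← _root_.map_mul, ← Units.val_mul, mul_inv_cancel, Units.val_one, _root_.map_one]
    intro h0
    rw [h0, zero_mul] at h1
    exact zero_ne_one h1
  have hpow : ∀ u : (ZMod p)ˣ, (χ (u : ZMod p)) ^ (p - 1) = 1 := by
    intro u
    rw [← _root_.map_pow, ← Units.val_pow_eq_pow_val, ← hcardu, pow_card_eq_one,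
      Units.val_one, _root_.map_one]
  have hroot : ∀ u : (ZMod p)ˣ, ((χ (u : ZMod p)) ^ k) ^ n = 1 := by
    intro u
    rw [← pow_mul, mul_comm, hnk]
    exact hpow u
  have hker : ∀ u : (ZMod p)ˣ, (χ (u : ZMod p)) ^ k = 1 ↔ u ^ k = 1 := by
    intro u
    constructor
    · intro h
      apply hχinj
      rwa [Units.val_pow_eq_pow_val, _root_.map_pow] at *
    · intro h
      rw [← _root_.map_pow, ← Units.val_pow_eq_pow_val, h, Units.val_one, _root_.map_one]
  -- sum over ZMod p = sum over units for functions vanishing at 0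
  have hsum_units : ∀ f : ZMod p → ℂ, f 0 = 0 →
      ∑ x : ZMod p, f x = ∑ u : (ZMod p)ˣ, f (u : ZMod p) := by
    intro f hf
    rw [← Finset.sum_erase Finset.univ hf]
    rw [Finset.sum_subtype (Finset.univ.erase (0 : ZMod p))
      (p := fun x : ZMod p => x ≠ 0) (by simp) f]
    exact (Equiv.sum_comp (unitsEquivNeZero (G₀ := ZMod p))
      (fun a : {a : ZMod p // a ≠ 0} => f a)).symm
  -- cardinalities
  have hUk_card : Nat.card Uk = k := by
    have hle : Nat.card Uk ≤ k := by
      have h1 : Nat.card Uk = Finset.card {y : (ZMod p)ˣ | y ^ k = 1} := by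
        rw [Nat.card_eq_fintype_card, ← Fintype.card_coe]
        exact Fintype.card_congr (Equiv.subtypeEquiv (Equiv.refl _) (by intro y; simp [hUk y]))
      rw [h1]
      exact IsCyclic.card_pow_eq_one_le hk1
    have hge : k ≤ Nat.card Uk := by
      obtain ⟨g, hg⟩ := IsCyclic.exists_generator (α := (ZMod p)ˣ)
      have hog : orderOf g = p - 1 := by
        rw [orderOf_eq_card_of_forall_mem_zpowers hg, Nat.card_eq_fintype_card, hcardu]
      have hnd : n ∣ p - 1 := ⟨k, hnk.symm⟩
      have hoh : orderOf (g ^ n) = k := by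
        rw [orderOf_pow, hog, Nat.gcd_eq_right hnd]
        exact Nat.div_eq_of_eq_mul_left hnpos (by rw [← hnk, mul_comm])
      have hmem : g ^ n ∈ Uk := by
        rw [hUk, ← pow_mul, hnk, ← hog]
        exact pow_orderOf_eq_one g
      calc k = Nat.card (zpowers (g ^ n)) := by rw [Nat.card_zpowers, hoh]
        _ ≤ Nat.card Uk := Subgroup.card_le_of_le (zpowers_le.mpr hmem)
    omega
  have hcardQ : Fintype.card ((ZMod p)ˣ ⧸ Uk) = n := by
    have h2 := Subgroup.card_eq_card_quotient_mul_card_subgroup Uk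
    rw [Nat.card_eq_fintype_card, hcardu, hUk_card, Nat.card_eq_fintype_card] at h2
    exact Nat.eq_of_mul_eq_mul_right (by omega) (h2.symm.trans hnk.symm)
  -- the coset representatives and eigenvalue data
  set e : ((ZMod p)ˣ ⧸ Uk) ≃ Fin n := Fintype.equivFinOfCardEq hcardQ with he
  set b : Fin n → (ZMod p)ˣ := fun t => (e.symm t).out with hb
  set ω : Fin n → ℂ := fun t => (χ ((b t : (ZMod p)ˣ) : ZMod p)) ^ k with hω
  have hω0 : ∀ t, ω t ≠ 0 := fun t => pow_ne_zero _ (hne0 _)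
  have hωn : ∀ t, ω t ^ n = 1 := fun t => hroot _
  have hbinv : ∀ t, χ (((b t)⁻¹ : (ZMod p)ˣ) : ZMod p) = (χ ((b t : (ZMod p)ˣ) : ZMod p))⁻¹ := by
    intro t
    apply eq_inv_of_mul_eq_one_left
    rw [← _root_.map_mul, ← Units.val_mul, inv_mul_cancel, Units.val_one, _root_.map_one]
  have hcoset : ∀ (u : (ZMod p)ˣ) (t : Fin n),
      (χ (u : ZMod p)) ^ k = ω t ↔ u * (b t)⁻¹ ∈ Uk := by
    intro u t
    rw [hUk]
    constructor
    · intro h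
      rw [← hker]
      rw [Units.val_mul, _root_.map_mul, hbinv, mul_pow, inv_pow, h]
      exact mul_inv_cancel₀ (hω0 t)
    · intro h
      rw [← hker, Units.val_mul, _root_.map_mul, hbinv, mul_pow, inv_pow] at h
      exact (mul_inv_eq_one₀ (hω0 t)).mp h
  have hbinj : ∀ s t : Fin n, ω s = ω t → s = t := by
    intro s t hst
    have h1 : b s * (b t)⁻¹ ∈ Uk := (hcoset (b s) t).mp hst
    have h2 : ((b t : (ZMod p)ˣ) : (ZMod p)ˣ ⧸ Uk) = ((b s : (ZMod p)ˣ) : (ZMod p)ˣ ⧸ Uk) := by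
      rw [QuotientGroup.eq]
      rw [mul_comm] at h1
      exact h1
    have h3 : e.symm t = e.symm s := by
      rw [hb] at h2
      simpa only [QuotientGroup.out_eq'] using h2
    exact (e.symm.injective h3).symm
  -- the matrices
  set F : Matrix (Fin n) (Fin n) ℂ := Matrix.of fun i t => ω t ^ (i : ℕ) with hF
  set Fi : Matrix (Fin n) (Fin n) ℂ :=
    Matrix.of fun t i => (n : ℂ)⁻¹ * ((ω t)⁻¹) ^ (i : ℕ) with hFi
  set D : Matrix (Fin n) (Fin n) ℂ := Matrix.diagonal fun t => lam (b t) with hD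
  have hFiF : Fi * F = 1 := by
    ext s t
    rw [Matrix.mul_apply]
    simp only [hFi, hF, Matrix.of_apply]
    have hterm : ∀ i : Fin n, (n : ℂ)⁻¹ * ((ω s)⁻¹) ^ (i : ℕ) * ω t ^ (i : ℕ)
        = (n : ℂ)⁻¹ * ((ω s)⁻¹ * ω t) ^ (i : ℕ) := by
      intro i; rw [mul_pow]; ring
    rw [Finset.sum_congr rfl fun i _ => hterm i, ← Finset.mul_sum,
      geom_sum_fin _ n (by rw [mul_pow, inv_pow, hωn, hωn, inv_one, one_mul])]
    by_cases hst : s = t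
    · subst hst
      rw [if_pos (by rw [inv_mul_cancel₀ (hω0 s)]), Matrix.one_apply_eq,
        inv_mul_cancel₀ hncast]
    · rw [if_neg, Matrix.one_apply_ne hst, mul_zero]
      intro hc
      exact hst (hbinj s t ((inv_mul_eq_one₀ (hω0 s)).mp hc))
  have hFFi : F * Fi = 1 := mul_eq_one_comm.mpr hFiF
  -- the main computation : M * F = F * D
  have hMF : (Matrix.of fun i j : Fin n => G (χ ^ (k * i.1) * (χ ^ (k * j.1))⁻¹)) * F
      = F * D := by
    ext i t
    rw [Matrix.mul_apply, hD, Matrix.mul_diagonal]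
    simp only [hF, Matrix.of_apply]
    -- expand G and swap sums
    have hGx : ∀ j : Fin n, G (χ ^ (k * i.1) * (χ ^ (k * j.1))⁻¹) * ω t ^ (j : ℕ)
        = ∑ x : ZMod p,
          (χ ^ (k * i.1) * (χ ^ (k * j.1))⁻¹) x * ζ ^ x.val * ω t ^ (j : ℕ) := by
      intro j; rw [hG, Finset.sum_mul]
    rw [Finset.sum_congr rfl fun j _ => hGx j, Finset.sum_comm]
    -- kill x = 0 and pass to units
    rw [hsum_units _ (by
      simp only [MulChar.map_nonunit _ (not_isUnit_zero (M₀ := ZMod p)), zero_mul]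
      exact Finset.sum_const_zero)]
    -- compute the inner sum for each unit
    have hinner : ∀ u : (ZMod p)ˣ,
        (∑ j : Fin n, (χ ^ (k * i.1) * (χ ^ (k * j.1))⁻¹) (u : ZMod p)
            * ζ ^ ((u : ZMod p)).val * ω t ^ (j : ℕ))
        = if u * (b t)⁻¹ ∈ Uk
            then ω t ^ (i : ℕ) * ((n : ℂ) * ζ ^ ((u : ZMod p)).val) else 0 := by
      intro u
      have hterm : ∀ j : Fin n,
          (χ ^ (k * i.1) * (χ ^ (k * j.1))⁻¹) (u : ZMod p)
            * ζ ^ ((u : ZMod p)).val * ω t ^ (j : ℕ)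
          = ((χ (u : ZMod p)) ^ (k * i.1) * ζ ^ ((u : ZMod p)).val)
            * (((χ (u : ZMod p)) ^ k)⁻¹ * ω t) ^ (j : ℕ) := by
        intro j
        rw [MulChar.mul_apply, MulChar.pow_apply_coe, MulChar.inv_apply_eq_inv',
          MulChar.pow_apply_coe, mul_pow (((χ (u : ZMod p)) ^ k)⁻¹), inv_pow, ← pow_mul]
        ring
      rw [Finset.sum_congr rfl fun j _ => hterm j, ← Finset.mul_sum,
        geom_sum_fin _ n (by rw [mul_pow, inv_pow, hroot, hωn, inv_one, one_mul])]
      rw [if_congr ((inv_mul_eq_one₀ (pow_ne_zero _ (hne0 u))).trans (hcoset u t)) rfl rfl]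
      by_cases hP : u * (b t)⁻¹ ∈ Uk
      · rw [if_pos hP, if_pos hP]
        have hk' : (χ (u : ZMod p)) ^ k = ω t := (hcoset u t).mpr hP
        rw [pow_mul, hk']
        ring
      · rw [if_neg hP, if_neg hP, mul_zero]
    have hcan : ∀ u : (ZMod p)ˣ, b t * (u * (b t)⁻¹) = u := fun u => by
      rw [mul_comm u, mul_inv_cancel_left]
    have hsum2 : (∑ u ∈ Finset.univ.filter (fun u : (ZMod p)ˣ => u * (b t)⁻¹ ∈ Uk),
          ζ ^ ((u : ZMod p)).val)
        = ∑ y : Uk, ζ ^ ((((b t) * (y : (ZMod p)ˣ) : (ZMod p)ˣ) : ZMod p)).val := by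
      refine Finset.sum_bij'
        (fun (u : (ZMod p)ˣ) (hu : u ∈ Finset.univ.filter
            (fun u : (ZMod p)ˣ => u * (b t)⁻¹ ∈ Uk)) =>
          (⟨u * (b t)⁻¹, (Finset.mem_filter.mp hu).2⟩ : Uk))
        (fun y _ => b t * (y : (ZMod p)ˣ))
        (fun a ha => Finset.mem_univ _) (fun y hy => ?_) (fun a ha => hcan a)
        (fun y hy => Subtype.ext ?_) (fun a ha => ?_)
      · rw [Finset.mem_filter]
        refine ⟨Finset.mem_univ _, ?_⟩
        show (b t * (y : (ZMod p)ˣ)) * (b t)⁻¹ ∈ Uk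
        rw [mul_comm (b t), mul_inv_cancel_right]
        exact y.2
      · show (b t * (y : (ZMod p)ˣ)) * (b t)⁻¹ = (y : (ZMod p)ˣ)
        rw [mul_comm (b t), mul_inv_cancel_right]
      · rw [hcan a]
    rw [Finset.sum_congr rfl fun u _ => hinner u, ← Finset.sum_filter, ← Finset.mul_sum,
      ← Finset.mul_sum, hsum2, hlam (b t)]
  -- assemble
  have hM : (Matrix.of fun i j : Fin n => G (χ ^ (k * i.1) * (χ ^ (k * j.1))⁻¹))
      = F * D * Fi := by
    calc (Matrix.of fun i j : Fin n => G (χ ^ (k * i.1) * (χ ^ (k * j.1))⁻¹))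
        = (Matrix.of fun i j : Fin n => G (χ ^ (k * i.1) * (χ ^ (k * j.1))⁻¹)) * (F * Fi) := by
          rw [hFFi, Matrix.mul_one]
      _ = ((Matrix.of fun i j : Fin n => G (χ ^ (k * i.1) * (χ ^ (k * j.1))⁻¹)) * F) * Fi := by
          rw [Matrix.mul_assoc]
      _ = F * D * Fi := by rw [hMF]
  rw [hM, charpoly_conj' F D Fi hFFi hFiF, hD, charpoly_diagonal']
  exact Equiv.prod_comp e.symm (fun q => X - C (lam q.out))
end

section
/- Let p ≥ 5. The coefficient of t in the minimal polynomial over ℚ of ζ_p + ζ_p^{−1} − 2 equals p(p²−1)/24; that is, a_p(2) = p(p²−1)/24. -/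
open Polynomial Finset

private lemma cast_choose_two (m : ℕ) : ((m.choose 2 : ℕ) : ℚ) = m * (m - 1) / 2 := by
  induction m with
  | zero => simp
  | succ k ih =>
    rw [Nat.choose_succ_succ]
    push_cast [ih]
    rw [Nat.choose_one_right]
    ring

private lemma cast_choose_three (m : ℕ) : ((m.choose 3 : ℕ) : ℚ) = m * (m - 1) * (m - 2) / 6 := by
  induction m with
  | zero => simp
  | succ k ih =>
    rw [Nat.choose_succ_succ]
    push_cast [ih, cast_choose_two]
    ring

private lemma sum_cast_choose_two (N : ℕ) :
    ∑ i ∈ Finset.range N, ((i.choose 2 : ℕ) : ℚ) = ((N.choose 3 : ℕ) : ℚ) := by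
  induction N with
  | zero => simp
  | succ k ih =>
    rw [Finset.sum_range_succ, ih, Nat.choose_succ_succ]
    push_cast
    ring

/-- For a prime `p ≥ 5`, the coefficient of `t` in the minimal polynomial
of `ζ_p + ζ_p⁻¹ - 2` over `ℚ` equals `p(p²-1)/24`, where `ζ_p = e^{2πi/p}`. -/
theorem ap2_eq (p : ℕ) [Fact p.Prime] (hp : 5 ≤ p)
    (ζ : ℂ) (hζ : ζ = Complex.exp (2 * Real.pi * Complex.I / p)) :
    (minpoly ℚ (ζ + ζ⁻¹ - 2)).coeff 1 = (p : ℚ) * ((p : ℚ) ^ 2 - 1) / 24 := by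
  have hp' : p.Prime := Fact.out
  have hp0 : p ≠ 0 := hp'.ne_zero
  obtain ⟨n, hn⟩ : ∃ n, p = 2 * n + 1 := by
    obtain ⟨k, hk⟩ := hp'.odd_of_ne_two (by omega)
    exact ⟨k, by omega⟩
  have hn2 : 2 ≤ n := by omega
  have hprim : IsPrimitiveRoot ζ p := hζ ▸ Complex.isPrimitiveRoot_exp p hp0
  have hζ0 : ζ ≠ 0 := hprim.ne_zero hp0
  have hζp : ζ ^ p = 1 := hprim.pow_eq_one
  set α := ζ + ζ⁻¹ - 2 with hα
  -- conjugation facts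
  have hconjζ : (starRingEnd ℂ) ζ = ζ⁻¹ := by
    rw [hζ, ← Complex.exp_conj, ← Complex.exp_neg]
    congr 1
    simp [map_div₀, Complex.conj_I, map_ofNat]
    ring
  have hconjα : (starRingEnd ℂ) α = α := by
    rw [hα, map_sub, map_add, map_inv₀, hconjζ, inv_inv]
    simp [map_ofNat]
    ring
  have him : ζ.im ≠ 0 := by
    have hppos : (0:ℝ) < p := by exact_mod_cast hp'.pos
    have h1 : (2 * Real.pi * Complex.I / p) = ((2 * Real.pi / p : ℝ) : ℂ) * Complex.I := by
      push_cast
      ring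
    rw [hζ, h1, Complex.exp_ofReal_mul_I_im]
    have hlt : 2 * Real.pi / p < Real.pi := by
      rw [div_lt_iff₀ hppos]
      have h5 : (5:ℝ) ≤ p := by exact_mod_cast hp
      nlinarith [Real.pi_pos, mul_le_mul_of_nonneg_left h5 Real.pi_pos.le]
    have hpos : 0 < 2 * Real.pi / p := by positivity
    exact ne_of_gt (Real.sin_pos_of_pos_of_lt_pi hpos hlt)
  have hζnotreal : (starRingEnd ℂ) ζ ≠ ζ := fun h => him (Complex.conj_eq_iff_im.1 h)
  -- integrality
  have hζint : IsIntegral ℚ ζ :=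
    ⟨X ^ p - C 1, monic_X_pow_sub_C 1 hp0, by simp [hζp]⟩
  have hζinv : ζ⁻¹ = ζ ^ (p - 1) :=
    inv_eq_of_mul_eq_one_left (by rw [← pow_succ, Nat.sub_add_cancel hp'.one_lt.le, hζp])
  have hαint : IsIntegral ℚ α := by
    have h1 : IsIntegral ℚ (ζ⁻¹) := hζinv ▸ hζint.pow _
    have h2 : IsIntegral ℚ (2 : ℂ) := ⟨X - C 2, monic_X_sub_C 2, by simp⟩
    exact (hζint.add h1).sub h2
  set P := minpoly ℚ α with hP
  set d := P.natDegree with hd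
  have hPmonic : P.Monic := minpoly.monic hαint
  -- Part A : d ≤ n
  have hdn : d ≤ n := by
    set E := IntermediateField.adjoin ℚ ({ζ} : Set ℂ) with hE
    have hζE : ζ ∈ E := IntermediateField.mem_adjoin_simple_self ℚ ζ
    have hαE : α ∈ E := by
      rw [hα]
      refine sub_mem (add_mem hζE (inv_mem hζE)) ?_
      have h2 := IntermediateField.algebraMap_mem E (2 : ℚ)
      simpa using h2
    have hfd : FiniteDimensional ℚ E := IntermediateField.adjoin.finiteDimensional hζint
    have hrankE : Module.finrank ℚ E = 2 * n := by
      rw [IntermediateField.adjoin.finrank hζint,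
        ← Polynomial.cyclotomic_eq_minpoly_rat hprim hp'.pos, Polynomial.natDegree_cyclotomic,
        Nat.totient_prime hp']
      omega
    have hinj : Function.Injective (algebraMap E ℂ) := RingHom.injective _
    have hminα : minpoly ℚ (⟨α, hαE⟩ : E) = P := by
      rw [hP, ← minpoly.algebraMap_eq hinj]
      rfl
    have hαEint : IsIntegral ℚ (⟨α, hαE⟩ : E) := by
      rwa [← isIntegral_algebraMap_iff hinj]
    have hdvd : d ∣ 2 * n := by
      have := minpoly.degree_dvd hαEint
      rwa [hminα, hrankE, ← hd] at this
    have hne : d ≠ 2 * n := by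
      intro hcontra
      set F := IntermediateField.adjoin ℚ ({α} : Set ℂ) with hF
      have hFE : F ≤ E := IntermediateField.adjoin_le_iff.2 (by
        intro x hx
        rw [Set.mem_singleton_iff.1 hx]
        exact hαE)
      have hrankF : Module.finrank ℚ F = d := IntermediateField.adjoin.finrank hαint
      have hFeqE : F = E := IntermediateField.eq_of_le_of_finrank_eq hFE (by
        rw [hrankF, hrankE, hcontra])
      have hζF : ζ ∈ F := hFeqE ▸ hζE
      have hrealall : ∀ x, x ∈ F → (starRingEnd ℂ) x = x := by
        intro x hx
        induction hx using IntermediateField.adjoin_induction with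
        | mem y hy =>
          rw [Set.mem_singleton_iff.1 hy]
          exact hconjα
        | algebraMap q => simp [Complex.conj_ofReal]
        | add a b _ _ ha hb => rw [map_add, ha, hb]
        | inv a _ ha => rw [map_inv₀, ha]
        | mul a b _ _ ha hb => rw [map_mul, ha, hb]
      exact hζnotreal (hrealall ζ hζF)
    obtain ⟨m, hm⟩ := hdvd
    have hm0 : m ≠ 0 := by rintro rfl; omega
    have hm1 : m ≠ 1 := by rintro rfl; omega
    have hmul : d * 2 ≤ d * m := Nat.mul_le_mul_left d (by omega)
    omega
  -- Part B : Q = cyclotomic p ℚ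
  set Q : ℚ[X] := ∑ j ∈ Finset.range (d + 1), C (P.coeff j) * (X - 1) ^ (2 * j) * X ^ (n - j)
    with hQdef
  have h2ζ : (ζ - 1) ^ 2 = ζ * α := by
    have hinv : ζ * ζ⁻¹ = 1 := mul_inv_cancel₀ hζ0
    calc (ζ - 1) ^ 2 = ζ * ζ - 2 * ζ + ζ * ζ⁻¹ := by rw [hinv]; ring
    _ = ζ * α := by rw [hα]; ring
  have hQζ : Polynomial.aeval ζ Q = 0 := by
    have hkey : ∀ j ∈ Finset.range (d + 1),
        (Polynomial.aeval ζ) (C (P.coeff j) * (X - 1) ^ (2 * j) * X ^ (n - j))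
          = ζ ^ n * (P.coeff j • α ^ j) := by
      intro j hj
      have hjn : j ≤ n := le_trans (Nat.lt_succ_iff.1 (Finset.mem_range.1 hj)) hdn
      have hpow : ζ ^ j * ζ ^ (n - j) = ζ ^ n := by
        rw [← pow_add]
        congr 1
        omega
      calc (Polynomial.aeval ζ) (C (P.coeff j) * (X - 1) ^ (2 * j) * X ^ (n - j))
          = algebraMap ℚ ℂ (P.coeff j) * (ζ - 1) ^ (2 * j) * ζ ^ (n - j) := by simp
      _ = algebraMap ℚ ℂ (P.coeff j) * (ζ ^ j * α ^ j * ζ ^ (n - j)) := by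
          rw [pow_mul, h2ζ, mul_pow]; ring
      _ = ζ ^ n * (P.coeff j • α ^ j) := by
          rw [Algebra.smul_def, ← hpow]; ring
    rw [map_sum, Finset.sum_congr rfl hkey, ← Finset.mul_sum]
    have haev : ∑ j ∈ Finset.range (d + 1), P.coeff j • α ^ j = Polynomial.aeval α P := by
      rw [Polynomial.aeval_eq_sum_range, hd]
    rw [haev, hP, minpoly.aeval, mul_zero]
  have hΦdvd : Polynomial.cyclotomic p ℚ ∣ Q := by
    rw [Polynomial.cyclotomic_eq_minpoly_rat hprim hp'.pos]
    exact minpoly.dvd ℚ ζ hQζ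
  have htermdeg : ∀ j, j ≤ d →
      (C (P.coeff j) * (X - 1 : ℚ[X]) ^ (2 * j) * X ^ (n - j)).natDegree ≤ n + j := by
    intro j hj
    refine le_trans (Polynomial.natDegree_mul_le) ?_
    have h1 : (C (P.coeff j) * (X - 1 : ℚ[X]) ^ (2 * j)).natDegree ≤ 2 * j := by
      refine le_trans (Polynomial.natDegree_mul_le) ?_
      have h2 : ((X - 1 : ℚ[X]) ^ (2 * j)).natDegree ≤ 2 * j := by
        refine le_trans (Polynomial.natDegree_pow_le) ?_
        have : (X - 1 : ℚ[X]).natDegree ≤ 1 := by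
          rw [show (X - 1 : ℚ[X]) = X - C 1 by rw [map_one]]
          exact (Polynomial.natDegree_X_sub_C 1).le
        calc 2 * j * (X - 1 : ℚ[X]).natDegree ≤ 2 * j * 1 := Nat.mul_le_mul_left _ this
        _ = 2 * j := by omega
      simpa using h2
    rw [Polynomial.natDegree_X_pow]
    omega
  have hQdeg : Q.natDegree ≤ n + d := by
    rw [hQdef]
    refine Polynomial.natDegree_sum_le_of_forall_le _ _ fun j hj => ?_
    have hjd : j ≤ d := Nat.lt_succ_iff.1 (Finset.mem_range.1 hj)
    exact le_trans (htermdeg j hjd) (by omega)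
  have hQcoeff : Q.coeff (n + d) = 1 := by
    rw [hQdef, Polynomial.finset_sum_coeff]
    rw [Finset.sum_eq_single d]
    · have hX1 : (X - 1 : ℚ[X]) = X - C 1 := by rw [map_one]
      have hmonic1 : (X - 1 : ℚ[X]).Monic := hX1 ▸ Polynomial.monic_X_sub_C (1 : ℚ)
      have hmon : ((X - 1 : ℚ[X]) ^ (2 * d) * X ^ (n - d)).Monic :=
        (hmonic1.pow _).mul (Polynomial.monic_X_pow _)
      have hdX1 : (X - 1 : ℚ[X]).natDegree = 1 := by
        rw [hX1]
        exact Polynomial.natDegree_X_sub_C 1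
      have hdeg2 : ((X - 1 : ℚ[X]) ^ (2 * d) * X ^ (n - d)).natDegree = n + d := by
        rw [Polynomial.natDegree_mul (pow_ne_zero _ hmonic1.ne_zero)
          (pow_ne_zero _ Polynomial.X_ne_zero), Polynomial.natDegree_pow,
          Polynomial.natDegree_X_pow, hdX1]
        omega
      rw [mul_assoc, Polynomial.coeff_C_mul, ← hdeg2, hmon.coeff_natDegree, mul_one, hd]
      exact hPmonic.coeff_natDegree
    · intro j hj hjd
      refine Polynomial.coeff_eq_zero_of_natDegree_lt ?_
      have hjd' : j ≤ d := Nat.lt_succ_iff.1 (Finset.mem_range.1 hj)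
      exact lt_of_le_of_lt (htermdeg j hjd') (by omega)
    · intro h
      exact absurd (Finset.self_mem_range_succ d) h
  have hΦdeg : (Polynomial.cyclotomic p ℚ).natDegree = 2 * n := by
    rw [Polynomial.natDegree_cyclotomic, Nat.totient_prime hp']
    omega
  have hnd : n ≤ d := by
    have hQne : Q ≠ 0 := fun h => by simp [h] at hQcoeff
    have h1 := Polynomial.natDegree_le_of_dvd hΦdvd hQne
    rw [hΦdeg] at h1
    omega
  have hdeq : d = n := le_antisymm hdn hnd
  have hQnatdeg : Q.natDegree = n + d :=
    le_antisymm hQdeg (Polynomial.le_natDegree_of_ne_zero (by rw [hQcoeff]; exact one_ne_zero))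
  have hQmonic : Q.Monic := by
    rw [Polynomial.Monic, Polynomial.leadingCoeff, hQnatdeg, hQcoeff]
  have hQeq : Q = Polynomial.cyclotomic p ℚ := by
    obtain ⟨u, hu⟩ := hΦdvd
    have hΦmonic : (Polynomial.cyclotomic p ℚ).Monic := Polynomial.cyclotomic.monic p ℚ
    have hu0 : u ≠ 0 := by
      rintro rfl
      rw [mul_zero] at hu
      exact hQmonic.ne_zero hu
    have hudeg : u.natDegree = 0 := by
      have h2 := Polynomial.natDegree_mul hΦmonic.ne_zero hu0
      rw [← hu, hQnatdeg, hΦdeg] at h2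
      omega
    obtain ⟨c, hc⟩ := Polynomial.natDegree_eq_zero.1 hudeg
    have hlc : (1 : ℚ) * c = 1 := by
      have h3 := hQmonic
      rw [Polynomial.Monic, hu, ← hc, Polynomial.leadingCoeff_mul, hΦmonic.leadingCoeff,
        Polynomial.leadingCoeff_C] at h3
      exact h3
    rw [hu, ← hc, show c = 1 by linarith [hlc], map_one, mul_one]
  -- Part C : coefficient extraction
  have hsum_comp : Q.comp (X + 1) =
      ∑ j ∈ Finset.range (d + 1), C (P.coeff j) * X ^ (2 * j) * (X + 1) ^ (n - j) := by
    rw [hQdef]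
    have hms := map_sum (Polynomial.compRingHom (X + 1 : ℚ[X]))
      (fun j => C (P.coeff j) * (X - 1) ^ (2 * j) * X ^ (n - j)) (Finset.range (d + 1))
    simp only [Polynomial.coe_compRingHom_apply] at hms
    rw [hms]
    refine Finset.sum_congr rfl fun j _ => ?_
    simp [Polynomial.mul_comp, Polynomial.pow_comp, Polynomial.sub_comp, Polynomial.X_comp,
      Polynomial.one_comp, Polynomial.C_comp, add_sub_cancel_right]
  have hterm : ∀ (c : ℚ) (j m k : ℕ), (C c * X ^ (2 * j) * (X + 1) ^ m).coeff k
      = if 2 * j ≤ k then c * ((m.choose (k - 2 * j) : ℕ) : ℚ) else 0 := by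
    intro c j m k
    rw [show C c * X ^ (2 * j) * (X + 1) ^ m = C c * (X + 1) ^ m * X ^ (2 * j) by ring,
      Polynomial.coeff_mul_X_pow']
    split_ifs with h
    · rw [Polynomial.coeff_C_mul, Polynomial.coeff_X_add_one_pow]
    · rfl
  have hc0 : (Q.comp (X + 1)).coeff 0 = P.coeff 0 := by
    rw [hsum_comp, Polynomial.finset_sum_coeff, Finset.sum_range_succ']
    simp only [hterm]
    simp
  have hc2 : (Q.comp (X + 1)).coeff 2 = P.coeff 1 + P.coeff 0 * ((n.choose 2 : ℕ) : ℚ) := by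
    obtain ⟨e, he⟩ : ∃ e, d = e + 1 := ⟨d - 1, by omega⟩
    rw [hsum_comp, Polynomial.finset_sum_coeff, Finset.sum_range_succ', he,
      Finset.sum_range_succ']
    simp only [hterm]
    have hzero : ∀ i ∈ Finset.range e,
        (if 2 * (i + 1 + 1) ≤ 2 then
          P.coeff (i + 1 + 1) * (((n - (i + 1 + 1)).choose (2 - 2 * (i + 1 + 1)) : ℕ) : ℚ)
        else 0) = 0 := by
      intro i _
      rw [if_neg (by omega)]
    rw [Finset.sum_congr rfl hzero, Finset.sum_const_zero]
    norm_num
  have hΦcomp : ((Polynomial.cyclotomic p ℚ).comp (X + 1)) =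
      ∑ i ∈ Finset.range p, (X + 1) ^ i := by
    rw [Polynomial.cyclotomic_prime]
    have hms := map_sum (Polynomial.compRingHom (X + 1 : ℚ[X]))
      (fun i => (X : ℚ[X]) ^ i) (Finset.range p)
    simp only [Polynomial.coe_compRingHom_apply] at hms
    rw [hms]
    refine Finset.sum_congr rfl fun i _ => ?_
    rw [Polynomial.X_pow_comp]
  have hΦ0 : ((Polynomial.cyclotomic p ℚ).comp (X + 1)).coeff 0 = (p : ℚ) := by
    rw [hΦcomp, Polynomial.finset_sum_coeff]
    simp [Polynomial.coeff_X_add_one_pow]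
  have hΦ2 : ((Polynomial.cyclotomic p ℚ).comp (X + 1)).coeff 2 = ((p.choose 3 : ℕ) : ℚ) := by
    rw [hΦcomp, Polynomial.finset_sum_coeff]
    simp only [Polynomial.coeff_X_add_one_pow]
    exact sum_cast_choose_two p
  rw [hQeq] at hc0 hc2
  have e0 : P.coeff 0 = (p : ℚ) := by rw [← hc0, hΦ0]
  have e2 : P.coeff 1 + P.coeff 0 * ((n.choose 2 : ℕ) : ℚ) = ((p.choose 3 : ℕ) : ℚ) := by
    rw [← hc2, hΦ2]
  have e1 : P.coeff 1 = ((p.choose 3 : ℕ) : ℚ) - (p : ℚ) * ((n.choose 2 : ℕ) : ℚ) := by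
    rw [← e2, e0]
    ring
  rw [e1, cast_choose_three, cast_choose_two]
  have hpq : (p : ℚ) = 2 * (n : ℚ) + 1 := by
    rw [hn]
    push_cast
    ring
  rw [hpq]
  ring
end
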